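/- arXiv:1405.5620 — 5 statements merged into one kernel-verified Lean document; each statement's English description precedes it below -/
import Mathlib

section
/- For q ≥ 2 and m ≥ 1, the proportion p_{q,n} of elements of S_n having no cycle of length divisible by q is the same for all n in {mq, mq+1, ..., mq+q-1}. -/
/-!
Let `a n = n! * p_{q,n}` count the permutations of `Fin n` with no cycle length divisible by `q`;
it suffices to show `a (n + 1) = (n + 1) * a n` whenever `q ∤ n + 1`.
Writing a permutation of `Fin (n + 1)` as `decomposeFin.symm (p, τ)` inserts `0` into the cycle of
`τ` just before `p` (or as a fixed point if `p = 0`). Hence the permutations whose cycle through `0`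
has length `k + 1`, all other cycles being admissible, number `n^(k) * a (n - k)` (falling
factorial), so `a (n + 1) = ∑_{q ∤ k + 1} n^(k) a (n - k)` and
`a (n + 2) = a (n + 1) + (n + 1) ∑_{q ∤ k + 2} n^(k) a (n - k)`.
If `q ∤ n + 2`, the terms with `q ∣ k + 2` and `q ∣ k + 1` match after shifting `k` by one, since
then `q ∤ n - k` and inductively `n^(k+1) a (n - k - 1) = n^(k) a (n - k)`; so the last sum is
`a (n + 1)`.
-/

def NoCycleLenMulOf {n : ℕ} (q : ℕ) (σ : Equiv.Perm (Fin n)) : Prop :=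
  ∀ x : Fin n, ¬ q ∣ Function.minimalPeriod σ x

/-- The proportion of elements of `S_n` with no cycle of length divisible by `q`. -/
noncomputable def propNoCycleMul (q n : ℕ) : ℚ :=
  ({σ : Equiv.Perm (Fin n) | NoCycleLenMulOf q σ}.ncard : ℚ) / (n.factorial : ℚ)

open Equiv Equiv.Perm Function Finset

theorem Function.minimalPeriod_eq_of_iterate_apply {α β : Type*} {f : α → α} {g : β → β}
    {e : α → β} (he : Injective e) {x : α} (h : ∀ j, g^[j] (e x) = e (f^[j] x)) :
    minimalPeriod g (e x) = minimalPeriod f x :=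
  minimalPeriod_eq_minimalPeriod_iff.mpr fun j => by
    simp only [IsPeriodicPt, IsFixedPt, h, he.eq_iff]

namespace Equiv.Perm

variable {α : Type*}

theorem minimalPeriod_pos [Finite α] (σ : Perm α) (x : α) : 0 < minimalPeriod σ x :=
  minimalPeriod_pos_of_mem_periodicPts (σ.injective.mem_periodicPts x)

theorem minimalPeriod_conj_apply (c σ : Perm α) (x : α) :
    minimalPeriod (c * σ * c⁻¹) (c x) = minimalPeriod σ x :=
  have hc : Semiconj c σ (c * σ * c⁻¹) := fun y => by simp
  minimalPeriod_eq_of_iterate_apply c.injective fun j => (hc.iterate_right j x).symm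

theorem SameCycle.minimalPeriod_eq [Finite α] {σ : Perm α} {x y : α} (h : σ.SameCycle x y) :
    minimalPeriod σ x = minimalPeriod σ y := by
  obtain ⟨i, -, rfl⟩ := h.exists_pow_eq'
  rw [← iterate_eq_pow, minimalPeriod_apply_iterate (σ.injective.mem_periodicPts x)]

section DecomposeFin

variable {n : ℕ} (τ : Perm (Fin n))

theorem semiconj_succ_decomposeFin_symm_zero : Semiconj Fin.succ τ (decomposeFin.symm (0, τ)) :=
  fun x => by simp

theorem minimalPeriod_decomposeFin_symm_zero_zero :
    minimalPeriod (decomposeFin.symm (0, τ)) 0 = 1 :=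
  minimalPeriod_eq_one_iff_isFixedPt.mpr (decomposeFin_symm_apply_zero 0 τ)

theorem minimalPeriod_decomposeFin_symm_zero_succ (x : Fin n) :
    minimalPeriod (decomposeFin.symm (0, τ)) x.succ = minimalPeriod τ x :=
  minimalPeriod_eq_of_iterate_apply (Fin.succ_injective n) fun j =>
    ((semiconj_succ_decomposeFin_symm_zero τ).iterate_right j x).symm

theorem not_sameCycle_decomposeFin_symm_zero (x : Fin n) :
    ¬ (decomposeFin.symm (0, τ)).SameCycle 0 x.succ := fun h =>
  Fin.succ_ne_zero x (h.eq_of_left (decomposeFin_symm_apply_zero 0 τ)).symm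

variable (p : Fin n)

theorem decomposeFin_symm_succ_apply_succ_of_ne {x : Fin n} (h : τ x ≠ p) :
    decomposeFin.symm (p.succ, τ) x.succ = (τ x).succ := by
  rw [decomposeFin_symm_apply_succ]
  exact swap_apply_of_ne_of_ne (Fin.succ_ne_zero _) (fun h' => h (Fin.succ_inj.mp h'))

theorem decomposeFin_symm_succ_apply_succ_of_eq {x : Fin n} (h : τ x = p) :
    decomposeFin.symm (p.succ, τ) x.succ = 0 := by
  rw [decomposeFin_symm_apply_succ, h, swap_apply_right]

theorem decomposeFin_symm_succ_iterate_zero {j : ℕ} (hj : j < minimalPeriod τ p) :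
    (decomposeFin.symm (p.succ, τ))^[j + 1] 0 = (τ^[j] p).succ := by
  induction j with
  | zero => simp
  | succ j ih =>
    rw [iterate_succ_apply', ih (by omega), decomposeFin_symm_succ_apply_succ_of_ne,
      iterate_succ_apply']
    rw [← iterate_succ_apply' τ]
    exact not_isPeriodicPt_of_pos_of_lt_minimalPeriod (by omega) hj

theorem isPeriodicPt_decomposeFin_symm_succ_zero :
    IsPeriodicPt (decomposeFin.symm (p.succ, τ)) (minimalPeriod τ p + 1) 0 := by
  obtain ⟨L, hL⟩ := Nat.exists_eq_add_one.mpr (τ.minimalPeriod_pos p)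
  have hτL : τ (τ^[L] p) = p := by
    rw [← iterate_succ_apply' τ, Nat.succ_eq_add_one, ← hL]; exact iterate_minimalPeriod
  rw [IsPeriodicPt, IsFixedPt, hL, iterate_succ_apply',
    decomposeFin_symm_succ_iterate_zero τ p (by omega),
    decomposeFin_symm_succ_apply_succ_of_eq τ p hτL]

theorem minimalPeriod_decomposeFin_symm_succ_zero :
    minimalPeriod (decomposeFin.symm (p.succ, τ)) 0 = minimalPeriod τ p + 1 := by
  have hper := isPeriodicPt_decomposeFin_symm_succ_zero τ p
  refine le_antisymm (hper.minimalPeriod_le (Nat.succ_pos _)) (not_lt.mp fun hlt => ?_)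
  obtain ⟨j, hj⟩ := Nat.exists_eq_add_one.mpr ((decomposeFin.symm (p.succ, τ)).minimalPeriod_pos 0)
  have h := iterate_minimalPeriod (f := decomposeFin.symm (p.succ, τ)) (x := 0)
  rw [hj, decomposeFin_symm_succ_iterate_zero τ p (by omega)] at h
  exact Fin.succ_ne_zero _ h

theorem sameCycle_decomposeFin_symm_succ_zero_succ_iff (x : Fin n) :
    (decomposeFin.symm (p.succ, τ)).SameCycle 0 x.succ ↔ τ.SameCycle p x := by
  constructor
  · intro h
    obtain ⟨i, -, hi⟩ := h.exists_pow_eq'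
    rw [← iterate_eq_pow, ← (isPeriodicPt_decomposeFin_symm_succ_zero τ p).iterate_mod_apply] at hi
    obtain ⟨j, hj⟩ : ∃ j, i % (minimalPeriod τ p + 1) = j + 1 := by
      refine Nat.exists_eq_add_one.mpr (Nat.pos_of_ne_zero fun h0 => ?_)
      rw [h0, iterate_zero_apply] at hi
      exact Fin.succ_ne_zero x hi.symm
    have hjL : j < minimalPeriod τ p := by
      have := Nat.mod_lt i (show 0 < minimalPeriod τ p + 1 by omega); omega
    rw [hj, decomposeFin_symm_succ_iterate_zero τ p hjL, Fin.succ_inj, iterate_eq_pow] at hi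
    exact hi ▸ sameCycle_pow_right.mpr (SameCycle.refl τ p)
  · intro h
    obtain ⟨i, -, rfl⟩ := h.exists_pow_eq'
    rw [← iterate_eq_pow, ← iterate_mod_minimalPeriod_eq,
      ← decomposeFin_symm_succ_iterate_zero τ p (Nat.mod_lt _ (τ.minimalPeriod_pos p)),
      iterate_eq_pow]
    exact sameCycle_pow_right.mpr (SameCycle.refl _ _)

theorem minimalPeriod_decomposeFin_symm_succ_succ {x : Fin n} (hx : ¬ τ.SameCycle p x) :
    minimalPeriod (decomposeFin.symm (p.succ, τ)) x.succ = minimalPeriod τ x := by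
  refine minimalPeriod_eq_of_iterate_apply (Fin.succ_injective n) fun j => ?_
  induction j with
  | zero => rfl
  | succ j ih =>
    rw [iterate_succ_apply', ih, decomposeFin_symm_succ_apply_succ_of_ne, iterate_succ_apply']
    rw [← iterate_succ_apply' τ, iterate_eq_pow]
    exact fun h => hx (h ▸ sameCycle_pow_right.mpr (SameCycle.refl τ x)).symm

end DecomposeFin

end Equiv.Perm

noncomputable def numNoCycleMul (q n : ℕ) : ℕ :=
  Nat.card {σ : Perm (Fin n) // NoCycleLenMulOf q σ}

noncomputable def markedCycleCount {α : Type*} (q : ℕ) (C : ℕ → Prop) (z : α) : ℕ :=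
  Nat.card {σ : Perm α // C (minimalPeriod σ z) ∧
    ∀ x, ¬ σ.SameCycle z x → ¬ q ∣ minimalPeriod σ x}

section MarkedCycleCount

variable {α : Type*} (q : ℕ) (C : ℕ → Prop)

theorem markedCycleCount_apply (c : Perm α) (z : α) :
    markedCycleCount q C (c z) = markedCycleCount q C z := by
  refine (Nat.card_congr ((MulAut.conj c).toEquiv.subtypeEquiv fun σ => ?_)).symm
  simp only [MulEquiv.toEquiv_eq_coe, MulEquiv.coe_toEquiv, MulAut.conj_apply,
    minimalPeriod_conj_apply, sameCycle_conj, Perm.coe_inv, symm_apply_apply]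
  refine and_congr_right' ((forall_congr' fun x => ?_).trans c.forall_congr_right)
  rw [symm_apply_apply, minimalPeriod_conj_apply]

theorem markedCycleCount_eq [DecidableEq α] (z w : α) :
    markedCycleCount q C z = markedCycleCount q C w := by
  rw [← swap_apply_left z w, markedCycleCount_apply]

end MarkedCycleCount

theorem numNoCycleMul_succ_eq_markedCycleCount (q n : ℕ) :
    numNoCycleMul q (n + 1) = markedCycleCount q (fun ℓ => ¬ q ∣ ℓ) (0 : Fin (n + 1)) :=
  Nat.card_congr <| subtypeEquivRight fun σ =>
    ⟨fun h => ⟨h 0, fun x _ => h x⟩, fun h x =>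
      if hx : σ.SameCycle 0 x then hx.minimalPeriod_eq ▸ h.1 else h.2 x hx⟩

theorem markedCycleCount_zero_eq_ite_add_sum (q : ℕ) (C : ℕ → Prop) [DecidablePred C] (n : ℕ) :
    markedCycleCount q C (0 : Fin (n + 1)) = (if C 1 then numNoCycleMul q n else 0) +
      ∑ p : Fin n, markedCycleCount q (fun ℓ => C (ℓ + 1)) p := by
  set P : Perm (Fin (n + 1)) → Prop := fun σ =>
    C (minimalPeriod σ 0) ∧ ∀ x, ¬ σ.SameCycle 0 x → ¬ q ∣ minimalPeriod σ x
  have hsplit : markedCycleCount q C (0 : Fin (n + 1)) =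
      ∑ p : Fin (n + 1), Nat.card {τ : Perm (Fin n) // P (decomposeFin.symm (p, τ))} := by
    rw [← Nat.card_sigma]
    exact Nat.card_congr ((decomposeFin.subtypeEquiv fun σ => by simp [P]).trans
      (subtypeProdEquivSigmaSubtype fun p τ => P (decomposeFin.symm (p, τ))))
  rw [hsplit, Fin.sum_univ_succ]
  congr 1
  · have hzero : ∀ τ, P (decomposeFin.symm (0, τ)) ↔ C 1 ∧ NoCycleLenMulOf q τ := fun τ => by
      simp only [P, Fin.forall_fin_succ, minimalPeriod_decomposeFin_symm_zero_zero,
        minimalPeriod_decomposeFin_symm_zero_succ, not_sameCycle_decomposeFin_symm_zero,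
        SameCycle.refl, not_true_eq_false, not_false_eq_true, false_implies, true_implies,
        true_and, NoCycleLenMulOf]
    rw [Nat.card_congr (subtypeEquivRight hzero)]
    split_ifs with h <;> simp [h, numNoCycleMul]
  · refine Finset.sum_congr rfl fun p _ => Nat.card_congr (subtypeEquivRight fun τ => ?_)
    simp only [P, Fin.forall_fin_succ, minimalPeriod_decomposeFin_symm_succ_zero,
      sameCycle_decomposeFin_symm_succ_zero_succ_iff, SameCycle.refl, not_true_eq_false,
      false_implies, true_and]
    refine and_congr_right' (forall_congr' fun x => imp_congr_right fun hx => ?_)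
    rw [minimalPeriod_decomposeFin_symm_succ_succ τ p hx]

theorem markedCycleCount_zero_eq_ite_add_mul (q : ℕ) (C : ℕ → Prop) [DecidablePred C] (n : ℕ) :
    markedCycleCount q C (0 : Fin (n + 2)) = (if C 1 then numNoCycleMul q (n + 1) else 0) +
      (n + 1) * markedCycleCount q (fun ℓ => C (ℓ + 1)) (0 : Fin (n + 1)) := by
  rw [markedCycleCount_zero_eq_ite_add_sum, sum_congr rfl fun p _ => markedCycleCount_eq q _ p 0,
    sum_const, card_univ, Fintype.card_fin, smul_eq_mul]

theorem markedCycleCount_zero_eq_sum (q : ℕ) (C : ℕ → Prop) [DecidablePred C] (n : ℕ) :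
    markedCycleCount q C (0 : Fin (n + 1)) =
      ∑ k ∈ range (n + 1) with C (k + 1), n.descFactorial k * numNoCycleMul q (n - k) := by
  induction n generalizing C with
  | zero => simp [markedCycleCount_zero_eq_ite_add_sum, sum_filter]
  | succ n ih =>
    rw [markedCycleCount_zero_eq_ite_add_mul, ih, sum_filter, sum_filter,
      sum_range_succ' _ (n + 1), mul_sum]
    simp only [Nat.succ_descFactorial_succ, Nat.descFactorial_zero, Nat.sub_zero, one_mul,
      Nat.add_sub_add_right, mul_ite, mul_zero, mul_assoc, zero_add]
    rw [add_comm]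

theorem sum_filter_not_dvd_add_two_eq {q n : ℕ} (f : ℕ → ℕ) (hn : ¬ q ∣ n + 2)
    (hf : ∀ k < n, q ∣ k + 2 → f (k + 1) = f k) :
    ∑ k ∈ range (n + 1) with ¬ q ∣ k + 1 + 1, f k = ∑ k ∈ range (n + 1) with ¬ q ∣ k + 1, f k := by
  have h1 : ¬ q ∣ 1 := fun h => hn (h.trans (one_dvd _))
  have hdvd : ∑ k ∈ range (n + 1) with q ∣ k + 1 + 1, f k =
      ∑ k ∈ range (n + 1) with q ∣ k + 1, f k := by
    rw [sum_filter, sum_filter, sum_range_succ, sum_range_succ', if_neg hn, zero_add, if_neg h1,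
      add_zero]
    refine sum_congr rfl fun k hk => ?_
    split_ifs with hk2
    exacts [(hf k (mem_range.mp hk) hk2).symm, rfl]
  have := sum_filter_add_sum_filter_not (range (n + 1)) (fun k => q ∣ k + 1 + 1) f
  have := sum_filter_add_sum_filter_not (range (n + 1)) (fun k => q ∣ k + 1) f
  omega

theorem numNoCycleMul_succ {q n : ℕ} (h : ¬ q ∣ n + 1) :
    numNoCycleMul q (n + 1) = (n + 1) * numNoCycleMul q n := by
  induction n using Nat.strong_induction_on with
  | _ n ih =>
  have h1 : ¬ q ∣ 1 := fun h' => h (h'.trans (one_dvd _))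
  rcases n with _ | n
  · simp [numNoCycleMul_succ_eq_markedCycleCount, markedCycleCount_zero_eq_ite_add_sum, h1]
  have hshift : ∀ k < n, q ∣ k + 2 → n.descFactorial (k + 1) * numNoCycleMul q (n - (k + 1)) =
      n.descFactorial k * numNoCycleMul q (n - k) := by
    intro k hk hdvd
    have hnk : n - k = n - (k + 1) + 1 := by omega
    have hq : ¬ q ∣ n - (k + 1) + 1 := fun h' =>
      h (by simpa [← hnk, show n - k + (k + 2) = n + 1 + 1 by omega] using dvd_add h' hdvd)
    rw [Nat.descFactorial_succ, hnk, ih _ (by omega) hq, ← hnk]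
    ring
  have hrest : markedCycleCount q (fun ℓ => ¬ q ∣ ℓ + 1) (0 : Fin (n + 1)) =
      numNoCycleMul q (n + 1) := by
    rw [numNoCycleMul_succ_eq_markedCycleCount, markedCycleCount_zero_eq_sum,
      markedCycleCount_zero_eq_sum]
    exact sum_filter_not_dvd_add_two_eq _ h hshift
  rw [numNoCycleMul_succ_eq_markedCycleCount, markedCycleCount_zero_eq_ite_add_mul, if_pos h1,
    hrest]
  ring

theorem propNoCycleMul_succ {q n : ℕ} (h : ¬ q ∣ n + 1) :
    propNoCycleMul q (n + 1) = propNoCycleMul q n := by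
  have hnum : ∀ m, {σ : Perm (Fin m) | NoCycleLenMulOf q σ}.ncard = numNoCycleMul q m :=
    fun m => (Nat.card_coe_set_eq _).symm
  rw [propNoCycleMul, propNoCycleMul, hnum, hnum, numNoCycleMul_succ h, Nat.factorial_succ]
  push_cast
  exact mul_div_mul_left _ _ (by positivity)

theorem stmt_2_general (q m : ℕ) :
    ∀ n, m * q ≤ n → n ≤ m * q + q - 1 → propNoCycleMul q n = propNoCycleMul q (m * q) := by
  intro n hlo hhi
  obtain ⟨j, rfl⟩ := Nat.exists_eq_add_of_le hlo
  induction j with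
  | zero => rfl
  | succ j ih =>
    rw [← add_assoc, propNoCycleMul_succ, ih (by omega) (by omega)]
    rw [add_assoc, Nat.dvd_add_right (dvd_mul_left q m)]
    exact Nat.not_dvd_of_pos_of_lt (by omega) (by omega)

theorem stmt_2 (q m : ℕ) (hq : 2 ≤ q) (hm : 1 ≤ m) :
    ∀ n, m * q ≤ n → n ≤ m * q + q - 1 → propNoCycleMul q n = propNoCycleMul q (m * q) :=
  stmt_2_general q m
end

section
/- For integers q, n, k with 1 ≤ k < n, the number of elements of the coset C_{n,k} with no cycle of length divisible by q satisfies the recurrence: N̄(C_{n,k}) = [q ∤ k]·N̄(S_{n-k}) + (n-k)·N̄(C_{n,k+1}), where [q ∤ k] is 1 if q does not divide k and 0 otherwise. -/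
/-- The coset `C_{n,k} = G_{n,k-1}·(1,2,…,k)` where `G_{n,k-1}` is the pointwise
stabilizer of the first `k-1` points of `{1,…,n}` (here `Fin n`, points `0,…,k-2`). -/
def cosetC (n k : ℕ) : Set (Equiv.Perm (Fin n)) :=
  {σ | ∃ g : Equiv.Perm (Fin n), (∀ i : Fin n, (i : ℕ) < k - 1 → g i = i) ∧
    σ = g * ((List.finRange n).take k).formPerm}

/-
`C_{n,k}` (here `k = i + 1`, points `0, …, n-1`) is the right coset `G · c` of the pointwise
stabilizer `G` of `{0, …, i-1}` by the cycle `c = (0 1 ⋯ i)`. Write `σ ∈ C_{n,k}` as `σ = g c`;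
since `g` fixes every point below `i`, either `g i = i` or `g i = j > i`.

If `g i = i`, then `g` fixes `{0, …, i}` and `σ` is the `k`-cycle `c` together with an arbitrary
permutation of the `n - k` points above `i`, so `σ` has no cycle of length divisible by `q` iff
`q ∤ k` and that permutation has none.

If `g i = j > i`, conjugating by `(j b)(i b)`, `b = i + 1`, is a bijection from `C_{n,k+1}` onto
these `σ`, and conjugation preserves cycle lengths. Summing over the `n - k` choices of `j` gives
the recurrence.
-/

open Equiv Function Set

theorem Function.Semiconj.minimalPeriod_eq {α β : Type*} {f : α → β} {fa : α → α} {fb : β → β}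
    (h : Semiconj f fa fb) (hf : Injective f) (x : α) :
    minimalPeriod fb (f x) = minimalPeriod fa x := by
  refine minimalPeriod_eq_minimalPeriod_iff.2 fun m => ⟨fun hm => hf ?_, fun hm => hm.map h⟩
  rw [(h.iterate_right m).eq]
  exact hm

open Fin.NatCast in
theorem minimalPeriod_finRotate (n : ℕ) [NeZero n] (y : Fin n) :
    minimalPeriod (finRotate n) y = n := by
  have hiter : ∀ l : ℕ, (finRotate n)^[l] y = y + l := by
    intro l
    induction l with
    | zero => simp
    | succ l ih => rw [iterate_succ_apply', ih, finRotate_apply, Nat.cast_succ, add_assoc]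
  rw [← Nat.dvd_right_iff_eq]
  intro l
  rw [← isPeriodicPt_iff_minimalPeriod_dvd, IsPeriodicPt, IsFixedPt, hiter, add_eq_left,
    Fin.natCast_eq_zero]

theorem Set.ncard_eq_sum_ncard_fiberwise {α β : Type*} [DecidableEq β] {s : Set α}
    {t : Finset β} {f : α → β} (hs : s.Finite) (H : MapsTo f s t) :
    s.ncard = ∑ b ∈ t, {a ∈ s | f a = b}.ncard := by
  rw [ncard_eq_toFinset_card s hs,
    Finset.card_eq_sum_card_fiberwise fun a ha => H (hs.mem_toFinset.1 ha)]
  refine Finset.sum_congr rfl fun b _ => ?_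
  rw [← ncard_coe_finset]
  congr 1
  ext
  simp

theorem Equiv.Perm.apply_eq_self_or_lt_of_mem_fixingSubgroup_Iio {α : Type*} [LinearOrder α]
    {i : α} {g : Perm α} (hg : g ∈ fixingSubgroup (Perm α) (Iio i)) : g i = i ∨ i < g i := by
  rcases lt_trichotomy (g i) i with hlt | heq | hgt
  · have hgg : g (g i) = g i := (mem_fixingSubgroup_iff _).1 hg _ hlt
    exact absurd (g.injective hgg ▸ hlt) (lt_irrefl _)
  · exact Or.inl heq
  · exact Or.inr hgt

theorem Equiv.Perm.mem_fixingSubgroup_Iic_iff {α : Type*} [LinearOrder α] {i : α} {g : Perm α} :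
    g ∈ fixingSubgroup (Perm α) (Iic i) ↔ g ∈ fixingSubgroup (Perm α) (Iio i) ∧ g i = i := by
  rw [← Iio_insert, mem_fixingSubgroup_iff, mem_fixingSubgroup_iff, forall_mem_insert, and_comm]
  rfl

theorem Equiv.Perm.mem_fixingSubgroup_Iic_iff_swap_conj {α : Type*} [LinearOrder α]
    {i j b : α} (hj : i < j) (hb : i < b) (g : Perm α) :
    g ∈ fixingSubgroup (Perm α) (Iic i) ↔
      swap j b * (swap i b * g) * swap j b ∈ fixingSubgroup (Perm α) (Iio i) ∧
        (swap j b * (swap i b * g) * swap j b) i = j := by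
  have ht : ∀ x ≤ i, swap j b x = x := fun x hx =>
    swap_apply_of_ne_of_ne (hx.trans_lt hj).ne (hx.trans_lt hb).ne
  have hs : ∀ x < i, swap i b x = x := fun x hx => swap_apply_of_ne_of_ne hx.ne (hx.trans hb).ne
  simp only [mem_fixingSubgroup_iff, Perm.smul_def, mem_Iic, mem_Iio, Perm.mul_apply]
  constructor
  · intro h
    refine ⟨fun x hx => ?_, ?_⟩
    · rw [ht x hx.le, h x hx.le, hs x hx, ht x hx.le]
    · rw [ht i le_rfl, h i le_rfl, swap_apply_left, swap_apply_right]
  · rintro ⟨h, hi⟩ x hx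
    rcases hx.lt_or_eq with hx | rfl
    · have hx' := h x hx
      rwa [ht x hx.le, swap_apply_eq_iff, ht x hx.le, swap_apply_eq_iff, hs x hx] at hx'
    · rwa [ht x le_rfl, swap_apply_eq_iff, swap_apply_left, swap_apply_eq_iff,
        swap_apply_right] at hi

namespace Fin

variable {n : ℕ}

theorem semiconj_castLE_cycleRange (i : Fin n) :
    Semiconj (castLE i.isLt) (finRotate (i + 1)) (cycleRange i) :=
  fun y => ((finRotate (i + 1)).extendDomain_apply_image
    (castLEEmb (Nat.succ_le_of_lt i.isLt)).toEquivRange y).symm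

theorem cycleRange_eq_mul_swap {i b : Fin n} (hb : (b : ℕ) = i + 1) :
    cycleRange b = cycleRange i * swap i b := by
  have hib : i < b := by simp [Fin.lt_def, hb]
  ext x
  rw [Perm.mul_apply]
  rcases lt_trichotomy x i with hx | rfl | hx
  · rw [swap_apply_of_ne_of_ne hx.ne (hx.trans hib).ne, coe_cycleRange_of_lt (hx.trans hib),
      coe_cycleRange_of_lt hx]
  · rw [swap_apply_left, coe_cycleRange_of_lt hib, cycleRange_of_gt hib, hb]
  · have hbx : b ≤ x := Fin.le_def.2 (by rw [Fin.lt_def] at hx; omega)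
    rcases hbx.eq_or_lt with rfl | hbx
    · rw [swap_apply_right, coe_cycleRange_of_le le_rfl, coe_cycleRange_of_le le_rfl, if_pos rfl,
        if_pos rfl]
    · rw [swap_apply_of_ne_of_ne hx.ne' hbx.ne', cycleRange_of_gt hbx, cycleRange_of_gt hx]

theorem commute_swap_cycleRange {i j b : Fin n} (hj : i < j) (hb : i < b) :
    Commute (swap j b) (cycleRange i) := by
  rw [Commute, SemiconjBy, mul_swap_eq_swap_mul, cycleRange_of_gt hj, cycleRange_of_gt hb]

def tailEquiv (i : Fin n) : Fin (n - (i + 1)) ≃ {x : Fin n // i < x} where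
  toFun j := ⟨⟨i + 1 + j, by omega⟩, Fin.lt_def.2 (by dsimp; omega)⟩
  invFun x := ⟨x.1 - (i + 1), by have := x.1.isLt; omega⟩
  left_inv j := by ext; simp
  right_inv x := by ext; have := Fin.lt_def.1 x.2; dsimp only; omega

def tailPermEquiv (i : Fin n) :
    Perm (Fin (n - (i + 1))) ≃ fixingSubgroup (Perm (Fin n)) (Iic i) :=
  (tailEquiv i).permCongr.trans <| (Perm.subtypeEquivSubtypePerm _).trans <|
    Equiv.subtypeEquivRight fun g => by simp [mem_fixingSubgroup_iff]

theorem tailPermEquiv_apply_tailEquiv (i : Fin n) (τ : Perm (Fin (n - (i + 1))))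
    (j : Fin (n - (i + 1))) :
    (tailPermEquiv i τ : Perm (Fin n)) (tailEquiv i j) = tailEquiv i (τ j) := by
  simp [tailPermEquiv]

end Fin

theorem List.formPerm_take_finRange {n : ℕ} (i : Fin n) :
    ((finRange n).take (i + 1)).formPerm = Fin.cycleRange i := by
  ext x
  rcases le_or_gt x i with hx | hx
  · have hlen : ((finRange n).take (i + 1)).length = i + 1 := by simp
    have hget : ((finRange n).take (i + 1))[(x : ℕ)]'(by rw [hlen]; omega) = x := by simp
    rw [← hget, formPerm_apply_getElem _ ((nodup_finRange n).sublist (take_sublist _ _)),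
      hget, Fin.coe_cycleRange_of_le hx]
    simp only [getElem_take, getElem_finRange, Fin.val_cast, hlen]
    rw [Fin.le_def] at hx
    split_ifs with hxi
    · simp [hxi]
    · exact Nat.mod_eq_of_lt (by omega)
  · rw [formPerm_apply_of_notMem, Fin.cycleRange_of_gt hx]
    intro hmem
    obtain ⟨m, hm, rfl⟩ := mem_take_iff_getElem.1 hmem
    simp only [getElem_finRange, Fin.cast_mk, Fin.lt_def, length_finRange, Order.add_one_le_iff,
      Fin.is_lt, inf_of_le_left, Order.lt_add_one_iff] at hx hm
    omega

section CosetC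

variable {n : ℕ}

theorem noCycleLenMulOf_conj (q : ℕ) (π σ : Perm (Fin n)) :
    NoCycleLenMulOf q (π * σ * π⁻¹) ↔ NoCycleLenMulOf q σ := by
  have hsemi : Semiconj π σ ⇑(π * σ * π⁻¹) := fun x => by simp
  exact (π.forall_congr fun x => by rw [hsemi.minimalPeriod_eq π.injective]).symm

theorem mem_cosetC_iff (i : Fin n) (σ : Perm (Fin n)) :
    σ ∈ cosetC n (i + 1) ↔ σ * (Fin.cycleRange i)⁻¹ ∈ fixingSubgroup (Perm (Fin n)) (Iio i) := by
  simp only [cosetC, List.formPerm_take_finRange, Nat.add_sub_cancel,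
    mem_fixingSubgroup_iff, Perm.smul_def, mem_Iio, Fin.lt_def]
  constructor
  · rintro ⟨g, hg, rfl⟩
    simpa using hg
  · exact fun h => ⟨_, h, (inv_mul_cancel_right σ _).symm⟩

-- The conjugator fixes `0, …, i-1` and sends `b ↦ i ↦ j`: it carries the chain
-- `b ↦ 0 ↦ ⋯ ↦ i` of the elements of `C_{n,b+1}` to the chain `i ↦ 0 ↦ ⋯ ↦ i-1 ↦ j`.
theorem conj_mem_cosetC_iff {i j b : Fin n} (hb : (b : ℕ) = i + 1) (hj : i < j) (σ : Perm (Fin n)) :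
    σ ∈ cosetC n (b + 1) ↔
      swap j b * swap i b * σ * (swap j b * swap i b)⁻¹ ∈ cosetC n (i + 1) ∧
        (swap j b * swap i b * σ * (swap j b * swap i b)⁻¹ * (Fin.cycleRange i)⁻¹) i = j := by
  have hib : i < b := by simp [Fin.lt_def, hb]
  have hIio : Iio b = Iic i := Set.ext fun x => by
    simp only [mem_Iio, mem_Iic, Fin.lt_def, Fin.le_def, hb]
    omega
  have hconj : swap j b * swap i b * σ * (swap j b * swap i b)⁻¹ * (Fin.cycleRange i)⁻¹ =
      swap j b * (swap i b * (σ * (Fin.cycleRange b)⁻¹)) * swap j b := by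
    rw [Fin.cycleRange_eq_mul_swap hb]
    simp only [mul_inv_rev, swap_inv, mul_assoc]
    rw [(Fin.commute_swap_cycleRange hj hib).inv_right.eq]
  rw [mem_cosetC_iff, mem_cosetC_iff, hconj, hIio]
  exact Perm.mem_fixingSubgroup_Iic_iff_swap_conj hj hib _

theorem noCycleLenMulOf_tailPermEquiv_mul_cycleRange (q : ℕ) (i : Fin n)
    (τ : Perm (Fin (n - (i + 1)))) :
    NoCycleLenMulOf q ((Fin.tailPermEquiv i τ : Perm (Fin n)) * Fin.cycleRange i) ↔
      ¬ q ∣ (i + 1) ∧ NoCycleLenMulOf q τ := by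
  set g := Fin.tailPermEquiv i τ
  have hlow : Semiconj (Fin.castLE i.isLt) (finRotate (i + 1)) ⇑(g * Fin.cycleRange i) :=
    fun y => by
      rw [Perm.mul_apply, ← Fin.semiconj_castLE_cycleRange i y]
      exact ((mem_fixingSubgroup_iff _).1 g.2 _
        (Fin.le_def.2 (Nat.lt_succ_iff.1 (finRotate _ y).is_lt))).symm
  have hhigh : Semiconj (fun j => (Fin.tailEquiv i j : Fin n)) τ ⇑(g * Fin.cycleRange i) :=
    fun j => by
      rw [Perm.mul_apply, Fin.cycleRange_of_gt (Fin.tailEquiv i j).2,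
        Fin.tailPermEquiv_apply_tailEquiv]
  have hlow_eq := hlow.minimalPeriod_eq (Fin.castLE_injective _)
  have hhigh_eq := hhigh.minimalPeriod_eq (Subtype.val_injective.comp (Fin.tailEquiv i).injective)
  simp only [minimalPeriod_finRotate] at hlow_eq
  constructor
  · intro h
    exact ⟨hlow_eq 0 ▸ h _, fun j => hhigh_eq j ▸ h _⟩
  · rintro ⟨hq, hτ⟩ x
    rcases le_or_gt x i with hx | hx
    · obtain ⟨y, rfl⟩ : ∃ y, Fin.castLE i.isLt y = x := ⟨⟨x, by rw [Fin.le_def] at hx; omega⟩, rfl⟩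
      rwa [hlow_eq]
    · obtain ⟨j, rfl⟩ : ∃ j, (Fin.tailEquiv i j : Fin n) = x :=
        ⟨(Fin.tailEquiv i).symm ⟨x, hx⟩, by simp⟩
      rw [hhigh_eq]
      exact hτ j

theorem ncard_cosetC_fiber_self (q : ℕ) (i : Fin n) :
    {σ ∈ {σ ∈ cosetC n (i + 1) | NoCycleLenMulOf q σ} | (σ * (Fin.cycleRange i)⁻¹) i = i}.ncard =
      (if ¬ q ∣ (i + 1) then 1 else 0) *
        {τ : Perm (Fin (n - (i + 1))) | NoCycleLenMulOf q τ}.ncard := by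
  have himage : {σ ∈ {σ ∈ cosetC n (i + 1) | NoCycleLenMulOf q σ} |
      (σ * (Fin.cycleRange i)⁻¹) i = i} =
      (fun τ => (Fin.tailPermEquiv i τ : Perm (Fin n)) * Fin.cycleRange i) ''
        {τ | ¬ q ∣ (i + 1) ∧ NoCycleLenMulOf q τ} := by
    ext σ
    simp only [mem_ofPred_eq, mem_image, mem_cosetC_iff]
    constructor
    · rintro ⟨⟨hC, hgood⟩, hi⟩
      set τ := (Fin.tailPermEquiv i).symm ⟨_, Perm.mem_fixingSubgroup_Iic_iff.2 ⟨hC, hi⟩⟩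
      have hτ : (Fin.tailPermEquiv i τ : Perm (Fin n)) * Fin.cycleRange i = σ := by
        simp [τ]
      exact ⟨τ, (noCycleLenMulOf_tailPermEquiv_mul_cycleRange q i τ).1 (hτ ▸ hgood), hτ⟩
    · rintro ⟨τ, hτ, rfl⟩
      rw [mul_inv_cancel_right]
      obtain ⟨hC, hi⟩ := Perm.mem_fixingSubgroup_Iic_iff.1 (Fin.tailPermEquiv i τ).2
      exact ⟨⟨hC, (noCycleLenMulOf_tailPermEquiv_mul_cycleRange q i τ).2 hτ⟩, hi⟩
  rw [himage, ncard_image_of_injective _ fun τ τ' h =>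
    (Fin.tailPermEquiv i).injective (Subtype.ext (mul_right_cancel h))]
  split_ifs with hq <;> simp [hq]

theorem ncard_cosetC_fiber_of_lt (q : ℕ) {i j b : Fin n} (hb : (b : ℕ) = i + 1) (hj : i < j) :
    {σ ∈ {σ ∈ cosetC n (i + 1) | NoCycleLenMulOf q σ} | (σ * (Fin.cycleRange i)⁻¹) i = j}.ncard =
      {σ ∈ cosetC n (b + 1) | NoCycleLenMulOf q σ}.ncard := by
  set π := swap j b * swap i b
  have hpre : {σ ∈ cosetC n (b + 1) | NoCycleLenMulOf q σ} = (fun σ => π * σ * π⁻¹) ⁻¹'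
      {σ ∈ {σ ∈ cosetC n (i + 1) | NoCycleLenMulOf q σ} | (σ * (Fin.cycleRange i)⁻¹) i = j} := by
    ext σ
    simp only [mem_preimage, mem_ofPred_eq, conj_mem_cosetC_iff hb hj, noCycleLenMulOf_conj]
    tauto
  rw [hpre, ncard_preimage_of_injective_subset_range (fun σ τ h => by simpa using h)
    fun σ _ => ⟨π⁻¹ * σ * π, by group⟩]

end CosetC

theorem stmt_3 (q n k : ℕ) (hk : 1 ≤ k) (hkn : k < n) :
    {σ ∈ cosetC n k | NoCycleLenMulOf q σ}.ncard =
      (if ¬ q ∣ k then 1 else 0) *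
          {σ : Equiv.Perm (Fin (n - k)) | NoCycleLenMulOf q σ}.ncard +
        (n - k) * {σ ∈ cosetC n (k + 1) | NoCycleLenMulOf q σ}.ncard := by
  obtain ⟨i, rfl⟩ : ∃ i : Fin n, (i : ℕ) + 1 = k := ⟨⟨k - 1, by omega⟩, by simp; omega⟩
  obtain ⟨b, hb⟩ : ∃ b : Fin n, (b : ℕ) = i + 1 := ⟨⟨i + 1, hkn⟩, rfl⟩
  have hmaps : MapsTo (fun σ => (σ * (Fin.cycleRange i)⁻¹) i)
      {σ ∈ cosetC n (i + 1) | NoCycleLenMulOf q σ} ↑(insert i (Finset.Ioi i)) := fun σ hσ => by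
    simp only [Finset.coe_insert, Finset.coe_Ioi, mem_insert_iff, mem_Ioi]
    exact Perm.apply_eq_self_or_lt_of_mem_fixingSubgroup_Iio ((mem_cosetC_iff i σ).1 hσ.1)
  rw [ncard_eq_sum_ncard_fiberwise (toFinite _) hmaps, Finset.sum_insert Finset.notMem_Ioi_self,
    ncard_cosetC_fiber_self,
    Finset.sum_congr rfl fun j hj => ncard_cosetC_fiber_of_lt q hb (Finset.mem_Ioi.1 hj),
    Finset.sum_const, Fin.card_Ioi, smul_eq_mul, show (i : ℕ) + 1 + 1 = b + 1 by omega,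
    show n - 1 - (i : ℕ) = n - (i + 1) by omega]
end

section
/- For integers q, n, k with 1 ≤ k < n, the number of elements of C_{n,k} having no cycle whose length divides q satisfies: N̄(C_{n,k}) = [k ∤ q]·N̄(S_{n-k}) + (n-k)·N̄(C_{n,k+1}). -/
/-- No cycle of length dividing q (fixed points count as cycles of length 1). -/
def NoCycleLenDvd {n : ℕ} (q : ℕ) (σ : Equiv.Perm (Fin n)) : Prop :=
  ∀ x : Fin n, ¬ Function.minimalPeriod σ x ∣ q

/-!
A permutation has no cycle of length dividing `q` iff its `q`-th power has no fixed point, a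
property invariant under conjugation. Write `σ ∈ C_{n,k}` (0-indexed) as `g * c` with `c` the
cycle `(0 1 … k-1)` and `g` fixing `0, …, k-2`; then `σ` runs `k-1 ↦ 0 ↦ ⋯ ↦ k-2 ↦ g (k-1)`, and
`g (k-1) ≥ k-1`. If `g (k-1) = k-1`, then `σ` is `c` times a disjoint permutation of the other
`n - k` points, which contributes `[k ∤ q] · N̄(S_{n-k})`. If `g (k-1) = j ≥ k`, relabelling by
`swap k j` and then `swap (k-1) k` turns the chain into `k ↦ 0 ↦ ⋯ ↦ k-2 ↦ k-1`, that is, it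
conjugates `σ` into `C_{n,k+1}`, bijectively for each of the `n - k` values of `j`.
-/

open Equiv

/-- In 0-indexed form, `stabBelow n m` is `G_{n,m}` and `initCycle n k` is `(1, 2, …, k)`. -/
def stabBelow (n m : ℕ) : Set (Perm (Fin n)) := {g | ∀ i : Fin n, (i : ℕ) < m → g i = i}

def initCycle (n k : ℕ) : Perm (Fin n) := ((List.finRange n).take k).formPerm

theorem Equiv.Perm.forall_extendDomain_apply_ne_iff {α β : Type*} {p : β → Prop}
    [DecidablePred p] (e : α ≃ Subtype p) (τ : Perm α) :
    (∀ b, p b → τ.extendDomain e b ≠ b) ↔ ∀ a, τ a ≠ a := by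
  constructor
  · intro h a ha
    exact h (e a) (e a).2 (by rw [Perm.extendDomain_apply_image, ha])
  · intro h b hb hτ
    rw [Perm.extendDomain_apply_subtype _ _ hb] at hτ
    exact h _ (e.eq_symm_apply.2 (Subtype.ext hτ))

theorem Equiv.Perm.exists_extendDomain_eq {α β : Type*} {p : β → Prop} [DecidablePred p]
    (e : α ≃ Subtype p) {g : Perm β} (hg : ∀ b, ¬ p b → g b = b) :
    ∃ τ : Perm α, τ.extendDomain e = g := by
  have hp : ∀ b, p (g b) ↔ p b := fun b => by
    by_cases hb : p b
    · refine iff_of_true (by_contra fun hgb => hgb ?_) hb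
      rwa [g.injective (hg _ hgb)]
    · rw [hg b hb]
  refine ⟨e.symm.permCongr (g.subtypePerm hp), Equiv.ext fun b => ?_⟩
  by_cases hb : p b
  · simp [Perm.extendDomain_apply_subtype _ _ hb, Equiv.permCongr_apply]
  · rw [Perm.extendDomain_apply_not_subtype _ _ hb, hg b hb]

theorem ncard_setOf_le_val (n k : ℕ) : {x : Fin n | k ≤ (x : ℕ)}.ncard = n - k := by
  have := Finset.card_filter_add_card_filter_not (s := (Finset.univ : Finset (Fin n)))
    (fun x : Fin n => (x : ℕ) < k)
  rw [Set.ncard_eq_toFinset_card', Set.toFinset_ofPred]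
  simp only [not_lt, Fin.card_filter_val_lt, Finset.card_univ, Fintype.card_fin] at this
  omega

section
variable {n : ℕ}

theorem noCycleLenDvd_iff {q : ℕ} {σ : Perm (Fin n)} :
    NoCycleLenDvd q σ ↔ ∀ x, (σ ^ q) x ≠ x := by
  simp only [NoCycleLenDvd, ← Function.isPeriodicPt_iff_minimalPeriod_dvd, Function.IsPeriodicPt,
    Function.IsFixedPt, ← Perm.iterate_eq_pow]

theorem noCycleLenDvd_conj {q : ℕ} (π σ : Perm (Fin n)) :
    NoCycleLenDvd q (π * σ * π⁻¹) ↔ NoCycleLenDvd q σ := by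
  simp only [noCycleLenDvd_iff, conj_pow, Perm.mul_apply]
  refine (π.forall_congr fun y => ?_).symm
  simp

theorem cosetC_eq_image (k : ℕ) :
    cosetC n k = (· * initCycle n k) '' stabBelow n (k - 1) := by
  ext σ
  exact ⟨fun ⟨g, hg, h⟩ => ⟨g, hg, h.symm⟩, fun ⟨g, hg, h⟩ => ⟨g, hg, h.symm⟩⟩

theorem ncard_sep_cosetC (k : ℕ) (P : Perm (Fin n) → Prop) :
    {σ ∈ cosetC n k | P σ}.ncard = {g ∈ stabBelow n (k - 1) | P (g * initCycle n k)}.ncard := by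
  rw [cosetC_eq_image, ← Set.ncard_image_of_injective
    {g ∈ stabBelow n (k - 1) | P (g * initCycle n k)} (mul_left_injective (initCycle n k))]
  exact congrArg Set.ncard (Set.image_inter_preimage _ _ {σ | P σ}).symm

theorem initCycle_apply_of_le {k : ℕ} {x : Fin n} (hx : k ≤ (x : ℕ)) : initCycle n k x = x := by
  refine List.formPerm_apply_of_notMem fun hmem => ?_
  obtain ⟨i, hi, rfl⟩ := List.getElem_of_mem hmem
  simp at hi hx
  omega

theorem initCycle_pow_apply_eq_self_iff {k q : ℕ} (hkn : k ≤ n) {x : Fin n} (hx : (x : ℕ) < k) :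
    (initCycle n k ^ q) x = x ↔ k ∣ q := by
  have hnd : ((List.finRange n).take k).Nodup :=
    (List.nodup_finRange n).sublist (List.take_sublist _ _)
  have hlen : ((List.finRange n).take k).length = k := by simp [hkn]
  have hxl : x = ((List.finRange n).take k)[(x : ℕ)]'(by omega) := by simp
  rw [initCycle, hxl, List.formPerm_pow_apply_getElem _ hnd, hnd.getElem_inj_iff, hlen,
    ← Nat.add_modEq_left_iff (a := x), Nat.ModEq, Nat.mod_eq_of_lt hx]

theorem initCycle_succ_succ {m : ℕ} (h : m + 1 < n) :
    initCycle n (m + 1 + 1) = initCycle n (m + 1) * swap ⟨m, by omega⟩ ⟨m + 1, h⟩ := by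
  have h2 : (List.finRange n).take (m + 1 + 1) =
      (List.finRange n).take m ++ [⟨m, by omega⟩, ⟨m + 1, h⟩] := by
    simp [List.take_add_one, h, show m < n by omega]
  have h1 : (List.finRange n).take (m + 1) = (List.finRange n).take m ++ [⟨m, by omega⟩] := by
    simp [List.take_add_one, show m < n by omega]
  rw [initCycle, initCycle, h1, h2, List.formPerm_append_pair]

theorem disjoint_initCycle {k : ℕ} {g : Perm (Fin n)} (hg : g ∈ stabBelow n k) :
    g.Disjoint (initCycle n k) := fun x =>
  (lt_or_ge (x : ℕ) k).imp (hg x) initCycle_apply_of_le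

theorem noCycleLenDvd_mul_initCycle_iff {k q : ℕ} (hk : 1 ≤ k) (hkn : k ≤ n) {g : Perm (Fin n)}
    (hg : g ∈ stabBelow n k) :
    NoCycleLenDvd q (g * initCycle n k) ↔ ¬ k ∣ q ∧ ∀ x : Fin n, k ≤ (x : ℕ) → (g ^ q) x ≠ x := by
  have hdisj := disjoint_initCycle hg
  simp only [noCycleLenDvd_iff, hdisj.commute.mul_pow, Ne,
    (hdisj.pow_disjoint_pow q q).mul_apply_eq_iff]
  constructor
  · intro h
    refine ⟨fun hq => h ⟨0, by omega⟩ ⟨?_, ?_⟩, fun x hx hgx => h x ⟨hgx, ?_⟩⟩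
    · exact Perm.pow_apply_eq_self_of_apply_eq_self (hg _ (by simp; omega)) q
    · exact (initCycle_pow_apply_eq_self_iff hkn (by simp; omega)).2 hq
    · exact Perm.pow_apply_eq_self_of_apply_eq_self (initCycle_apply_of_le hx) q
  · rintro ⟨hq, h⟩ x ⟨hgx, hcx⟩
    rcases lt_or_ge (x : ℕ) k with hx | hx
    · exact hq ((initCycle_pow_apply_eq_self_iff hkn hx).1 hcx)
    · exact h x hx hgx

theorem ncard_noCycleLenDvd_stabBelow_mul_initCycle {k q : ℕ} (hk : 1 ≤ k) (hkn : k ≤ n) :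
    {g ∈ stabBelow n k | NoCycleLenDvd q (g * initCycle n k)}.ncard =
      (if ¬ k ∣ q then 1 else 0) * {τ : Perm (Fin (n - k)) | NoCycleLenDvd q τ}.ncard := by
  obtain ⟨e⟩ : Nonempty (Fin (n - k) ≃ {x : Fin n // k ≤ (x : ℕ)}) :=
    Finite.card_eq.1 ((Nat.card_fin _).trans
      ((ncard_setOf_le_val n k).symm.trans (Nat.card_coe_set_eq _).symm))
  have himage : {g ∈ stabBelow n k | NoCycleLenDvd q (g * initCycle n k)} =
      (·.extendDomain e) '' {τ | ¬ k ∣ q ∧ NoCycleLenDvd q τ} := by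
    ext g
    constructor
    · rintro ⟨hg, hP⟩
      obtain ⟨τ, rfl⟩ := Perm.exists_extendDomain_eq e fun x hx => hg x (not_le.1 hx)
      rw [noCycleLenDvd_mul_initCycle_iff hk hkn hg, ← Perm.extendDomain_pow,
        Perm.forall_extendDomain_apply_ne_iff] at hP
      exact ⟨τ, ⟨hP.1, noCycleLenDvd_iff.2 hP.2⟩, rfl⟩
    · rintro ⟨τ, ⟨hq, hτ⟩, rfl⟩
      have hg : τ.extendDomain e ∈ stabBelow n k := fun x hx =>
        Perm.extendDomain_apply_not_subtype _ _ (not_le.2 hx)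
      refine ⟨hg, (noCycleLenDvd_mul_initCycle_iff hk hkn hg).2 ⟨hq, ?_⟩⟩
      rw [← Perm.extendDomain_pow, Perm.forall_extendDomain_apply_ne_iff]
      exact noCycleLenDvd_iff.1 hτ
  rw [himage, Set.ncard_image_of_injective _ (show Function.Injective
    fun τ : Perm (Fin (n - k)) => τ.extendDomain e from Perm.extendDomainHom_injective e)]
  by_cases hq : k ∣ q <;> simp [hq]

theorem le_stabBelow_apply {m : ℕ} (hm : m < n) {g : Perm (Fin n)} (hg : g ∈ stabBelow n m) :
    m ≤ (g ⟨m, hm⟩ : ℕ) := by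
  by_contra! hlt
  have := congrArg Fin.val (g.injective (hg _ hlt))
  simp at this
  omega

theorem mem_stabBelow_succ {m : ℕ} (hm : m < n) {g : Perm (Fin n)} :
    g ∈ stabBelow n (m + 1) ↔ g ∈ stabBelow n m ∧ g ⟨m, hm⟩ = ⟨m, hm⟩ := by
  refine ⟨fun hg => ⟨fun x hx => hg x (by omega), hg _ (by simp)⟩, fun ⟨hg, hgm⟩ x hx => ?_⟩
  rcases Nat.lt_succ_iff_lt_or_eq.1 hx with hx | hx
  · exact hg x hx
  · rw [show x = ⟨m, hm⟩ from Fin.ext hx, hgm]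

theorem ncard_sep_stabBelow_eq_add {m : ℕ} (hm : m < n) (Q : Perm (Fin n) → Prop) :
    {g ∈ stabBelow n m | Q g}.ncard =
      {g ∈ stabBelow n (m + 1) | Q g}.ncard +
        {g ∈ stabBelow n m | m + 1 ≤ (g ⟨m, hm⟩ : ℕ) ∧ Q g}.ncard := by
  rw [← Set.ncard_union_eq ?disj]
  · congr 1
    ext g
    simp only [Set.mem_union, Set.mem_ofPred_eq, mem_stabBelow_succ hm, Fin.ext_iff]
    constructor
    · rintro ⟨hg, hQ⟩
      rcases (le_stabBelow_apply hm hg).eq_or_lt with h | h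
      · exact Or.inl ⟨⟨hg, h.symm⟩, hQ⟩
      · exact Or.inr ⟨hg, h, hQ⟩
    · rintro (⟨⟨hg, -⟩, hQ⟩ | ⟨hg, -, hQ⟩) <;> exact ⟨hg, hQ⟩
  · rw [Set.disjoint_left]
    rintro g ⟨hg, -⟩ ⟨-, hlt, -⟩
    rw [((mem_stabBelow_succ hm).1 hg).2] at hlt
    simp at hlt

end

section
variable {n m : ℕ} (h : m + 1 < n)

/-- For `m + 1 ≤ j`, `stabShift h j` maps `G_{n,m+1}` bijectively onto `{g ∈ G_{n,m} | g m = j}`. -/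
def stabShift (j : Fin n) (g : Perm (Fin n)) : Perm (Fin n) :=
  swap ⟨m + 1, h⟩ j * (swap ⟨m, by omega⟩ ⟨m + 1, h⟩ * g) * swap ⟨m + 1, h⟩ j

theorem stabShift_mem {j : Fin n} (hj : m + 1 ≤ (j : ℕ)) {g : Perm (Fin n)}
    (hg : g ∈ stabBelow n (m + 1)) :
    stabShift h j g ∈ stabBelow n m ∧ stabShift h j g ⟨m, by omega⟩ = j := by
  have hne : ∀ x : Fin n, (x : ℕ) ≤ m → x ≠ ⟨m + 1, h⟩ ∧ x ≠ j := fun x hx =>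
    ⟨Fin.ne_of_val_ne (by simp; omega), Fin.ne_of_val_ne (by omega)⟩
  refine ⟨fun x hx => ?_, ?_⟩
  · have hxm : x ≠ ⟨m, by omega⟩ := Fin.ne_of_val_ne (by simp; omega)
    simp [stabShift, swap_apply_of_ne_of_ne (hne x hx.le).1 (hne x hx.le).2, hg x (by omega),
      swap_apply_of_ne_of_ne hxm (hne x hx.le).1]
  · have ha := hne ⟨m, by omega⟩ le_rfl
    simp [stabShift, swap_apply_of_ne_of_ne ha.1 ha.2, hg ⟨m, by omega⟩ (by simp)]

theorem stabShift_mul_initCycle {j : Fin n} (hj : m + 1 ≤ (j : ℕ)) (g : Perm (Fin n)) :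
    stabShift h j g * initCycle n (m + 1) =
      (swap ⟨m + 1, h⟩ j * swap ⟨m, by omega⟩ ⟨m + 1, h⟩) * (g * initCycle n (m + 1 + 1)) *
        (swap ⟨m + 1, h⟩ j * swap ⟨m, by omega⟩ ⟨m + 1, h⟩)⁻¹ := by
  have hcomm : swap ⟨m + 1, h⟩ j * initCycle n (m + 1) =
      initCycle n (m + 1) * swap ⟨m + 1, h⟩ j := by
    rw [mul_swap_eq_swap_mul, initCycle_apply_of_le (x := ⟨m + 1, h⟩) le_rfl,
      initCycle_apply_of_le hj]
  rw [initCycle_succ_succ h]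
  simp only [stabShift, mul_inv_rev, swap_inv, mul_assoc, hcomm, swap_mul_self_mul]

theorem exists_stabShift_eq {g : Perm (Fin n)} (hg : g ∈ stabBelow n m)
    (hj : m + 1 ≤ (g ⟨m, by omega⟩ : ℕ)) :
    ∃ g' ∈ stabBelow n (m + 1), stabShift h (g ⟨m, by omega⟩) g' = g := by
  set j := g ⟨m, by omega⟩ with hj_def
  refine ⟨swap ⟨m, by omega⟩ ⟨m + 1, h⟩ * swap ⟨m + 1, h⟩ j * g * swap ⟨m + 1, h⟩ j,
    (mem_stabBelow_succ (by omega)).2 ⟨fun x hx => ?_, ?_⟩, ?_⟩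
  · have hxb : x ≠ ⟨m + 1, h⟩ := Fin.ne_of_val_ne (by simp; omega)
    have hxj : x ≠ j := Fin.ne_of_val_ne (by omega)
    have hxa : x ≠ ⟨m, by omega⟩ := Fin.ne_of_val_ne (by simp; omega)
    simp [swap_apply_of_ne_of_ne hxb hxj, hg x hx, swap_apply_of_ne_of_ne hxa hxb]
  · have hab : (⟨m, by omega⟩ : Fin n) ≠ ⟨m + 1, h⟩ := Fin.ne_of_val_ne (by simp)
    have haj : (⟨m, by omega⟩ : Fin n) ≠ j := Fin.ne_of_val_ne (show m ≠ (j : ℕ) by omega)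
    simp [swap_apply_of_ne_of_ne hab haj, ← hj_def]
  · simp only [stabShift, mul_assoc, swap_mul_self_mul, swap_mul_self, mul_one]

end

theorem ncard_noCycleLenDvd_stabBelow_apply_ge {n m : ℕ} (q : ℕ) (h : m + 1 < n) :
    {g ∈ stabBelow n m | m + 1 ≤ (g ⟨m, by omega⟩ : ℕ) ∧
        NoCycleLenDvd q (g * initCycle n (m + 1))}.ncard =
      (n - (m + 1)) *
        {g ∈ stabBelow n (m + 1) | NoCycleLenDvd q (g * initCycle n (m + 1 + 1))}.ncard := by
  rw [← ncard_setOf_le_val n (m + 1), ← Set.ncard_prod]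
  symm
  refine Set.ncard_congr (fun p _ => stabShift h p.1 p.2) ?_ ?_ ?_
  · rintro ⟨j, g⟩ ⟨hj, hg, hP⟩
    obtain ⟨hmem, happ⟩ := stabShift_mem h hj hg
    refine ⟨hmem, by rw [happ]; exact hj, ?_⟩
    rwa [stabShift_mul_initCycle h hj, noCycleLenDvd_conj]
  · rintro ⟨j, g⟩ ⟨j', g'⟩ ⟨hj, hg, -⟩ ⟨hj', hg', -⟩ heq
    obtain rfl : j = j' := (stabShift_mem h hj hg).2.symm.trans
      ((congrArg (· ⟨m, by omega⟩) heq).trans (stabShift_mem h hj' hg').2)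
    simpa [stabShift] using heq
  · rintro g ⟨hg, hj, hP⟩
    obtain ⟨g', hg', hgg⟩ := exists_stabShift_eq h hg hj
    rw [← hgg, stabShift_mul_initCycle h hj, noCycleLenDvd_conj] at hP
    exact ⟨(_, g'), ⟨hj, hg', hP⟩, hgg⟩

theorem stmt_7 (q n k : ℕ) (hk : 1 ≤ k) (hkn : k < n) :
    {σ ∈ cosetC n k | NoCycleLenDvd q σ}.ncard =
      (if ¬ k ∣ q then 1 else 0) *
          {σ : Equiv.Perm (Fin (n - k)) | NoCycleLenDvd q σ}.ncard +
        (n - k) * {σ ∈ cosetC n (k + 1) | NoCycleLenDvd q σ}.ncard := by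
  obtain ⟨m, rfl⟩ : ∃ m, k = m + 1 := ⟨k - 1, by omega⟩
  rw [ncard_sep_cosetC, ncard_sep_cosetC, Nat.add_sub_cancel, Nat.add_sub_cancel,
    ncard_sep_stabBelow_eq_add (by omega), ncard_noCycleLenDvd_stabBelow_mul_initCycle hk hkn.le,
    ncard_noCycleLenDvd_stabBelow_apply_ge q hkn]
end

section
/- For q ≥ 2 and m ≥ 1: ∏_{k=1}^{m} (1 - 1/(qk)) ≤ c_q · m^{-1/q}, where c_q = exp(π²/(6q²)). -/
open Real

theorem stmt_14 (q m : ℕ) (hq : 2 ≤ q) (hm : 1 ≤ m) :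
    ∏ k ∈ Finset.Icc 1 m, (1 - 1 / ((q : ℝ) * k)) ≤
      Real.exp (π ^ 2 / (6 * (q : ℝ) ^ 2)) * (m : ℝ) ^ (-(1 : ℝ) / q) := by
  have hq0 : (0 : ℝ) < q := by positivity
  have hm0 : (0 : ℝ) < m := by exact_mod_cast hm
  have step1 : ∏ k ∈ Finset.Icc 1 m, (1 - 1 / ((q : ℝ) * k)) ≤
      Real.exp (-∑ k ∈ Finset.Icc 1 m, 1 / ((q : ℝ) * k)) := by
    have heq : Real.exp (-∑ k ∈ Finset.Icc 1 m, 1 / ((q : ℝ) * k)) =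
        ∏ k ∈ Finset.Icc 1 m, Real.exp (-(1 / ((q : ℝ) * k))) := by
      rw [← Real.exp_sum, ← Finset.sum_neg_distrib]
    rw [heq]
    apply Finset.prod_le_prod
    · intro k hk
      have hk1 : 1 ≤ k := (Finset.mem_Icc.mp hk).1
      have hk0 : (1 : ℝ) ≤ k := by exact_mod_cast hk1
      have : 1 / ((q : ℝ) * k) ≤ 1 := by
        rw [div_le_one (by positivity)]
        have hq2 : (2:ℝ) ≤ q := by exact_mod_cast hq
        nlinarith [hq2, hk0]
      linarith
    · intro k hk
      have : (1 : ℝ) + (-(1 / ((q : ℝ) * k))) ≤ Real.exp (-(1 / ((q : ℝ) * k))) :=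
        Real.add_one_le_exp _ |>.trans_eq' (by ring)
      linarith
  have hsum : ∑ k ∈ Finset.Icc 1 m, 1 / ((q : ℝ) * k) = (1 / q) * ∑ k ∈ Finset.Icc 1 m, (k : ℝ)⁻¹ := by
    rw [Finset.mul_sum]
    apply Finset.sum_congr rfl
    intro k _
    rw [one_div, mul_inv, one_div, mul_comm]
  have hlog : Real.log m ≤ ∑ k ∈ Finset.Icc 1 m, (k : ℝ)⁻¹ := by
    have h1 := log_add_one_le_harmonic (m - 1)
    rw [Nat.sub_add_cancel hm] at h1
    rw [harmonic_eq_sum_Icc] at h1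
    push_cast at h1
    refine h1.trans (Finset.sum_le_sum_of_subset_of_nonneg ?_ ?_)
    · exact Finset.Icc_subset_Icc_right (Nat.sub_le m 1)
    · intro k _ _; positivity
  have step2 : Real.exp (-∑ k ∈ Finset.Icc 1 m, 1 / ((q : ℝ) * k)) ≤ (m : ℝ) ^ (-(1 : ℝ) / q) := by
    rw [Real.rpow_def_of_pos hm0, Real.exp_le_exp, hsum]
    have : (1 / (q : ℝ)) * Real.log m ≤ (1 / q) * ∑ k ∈ Finset.Icc 1 m, (k : ℝ)⁻¹ := by
      apply mul_le_mul_of_nonneg_left hlog (by positivity)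
    have h2 : Real.log ↑m * (-1 / (q : ℝ)) = -(1 / q * Real.log ↑m) := by ring
    rw [h2]
    linarith
  calc ∏ k ∈ Finset.Icc 1 m, (1 - 1 / ((q : ℝ) * k)) ≤ (m : ℝ) ^ (-(1 : ℝ) / q) :=
        step1.trans step2
    _ ≤ Real.exp (π ^ 2 / (6 * (q : ℝ) ^ 2)) * (m : ℝ) ^ (-(1 : ℝ) / q) := by
        nlinarith [Real.one_le_exp (show (0:ℝ) ≤ π ^ 2 / (6 * (q:ℝ) ^ 2) by positivity),
          Real.rpow_pos_of_pos hm0 (-(1:ℝ)/q)]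
end

section
/- For q ≥ 2 and m ≥ 1: c_q^{-1} · (e·m)^{-1/q} ≤ ∏_{k=1}^{m} (1 - 1/(qk)), where c_q = exp(π²/(6q²)) and e is Euler's number. -/
open Real

lemma exp_neg_le_one_sub (x : ℝ) (h0 : 0 ≤ x) (h1 : x ≤ 1/2) :
    Real.exp (-(x + x^2)) ≤ 1 - x := by
  set t := x + x^2 with ht
  have ht0 : 0 ≤ t := by nlinarith
  have hsum : 1 + t + t^2/2 ≤ Real.exp t := by
    have := Real.sum_le_exp_of_nonneg ht0 3
    simp [Finset.sum_range_succ, Nat.factorial] at this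
    linarith
  have hkey : 1 ≤ (1 - x) * Real.exp t := by
    have h2 : 1 ≤ (1 - x) * (1 + t + t^2/2) := by nlinarith
    have h3 : (1 - x) * (1 + t + t^2/2) ≤ (1 - x) * Real.exp t := by
      apply mul_le_mul_of_nonneg_left hsum (by linarith)
    linarith
  rw [Real.exp_neg]
  rw [inv_le_iff_one_le_mul₀' (Real.exp_pos t)] at *
  linarith [hkey]

theorem stmt_15 (q m : ℕ) (hq : 2 ≤ q) (hm : 1 ≤ m) :
    (Real.exp (π ^ 2 / (6 * (q : ℝ) ^ 2)))⁻¹ * (Real.exp 1 * (m : ℝ)) ^ (-(1 : ℝ) / q) ≤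
      ∏ k ∈ Finset.Icc 1 m, (1 - 1 / ((q : ℝ) * k)) := by
  have hq0 : (0:ℝ) < q := by positivity
  have hm0 : (0:ℝ) < m := by exact_mod_cast hm
  -- rewrite LHS as exp of something
  have hlhs : (Real.exp (π ^ 2 / (6 * (q : ℝ) ^ 2)))⁻¹ * (Real.exp 1 * (m : ℝ)) ^ (-(1 : ℝ) / q)
      = Real.exp (-(π ^ 2 / (6 * (q:ℝ)^2)) + (1 + Real.log m) * (-1/q)) := by
    rw [Real.rpow_def_of_pos (by positivity), Real.log_mul (by positivity) (by positivity),
      Real.log_exp, ← Real.exp_neg, ← Real.exp_add]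
  rw [hlhs]
  -- lower bound each factor by exp
  have hstep : ∀ k ∈ Finset.Icc 1 m,
      Real.exp (-(1/((q:ℝ)*k) + (1/((q:ℝ)*k))^2)) ≤ 1 - 1/((q:ℝ)*k) := by
    intro k hk
    simp only [Finset.mem_Icc] at hk
    have hk1 : (1:ℝ) ≤ k := by exact_mod_cast hk.1
    have hqk : (2:ℝ) ≤ (q:ℝ) * k := by
      calc (2:ℝ) ≤ (q:ℝ) := by exact_mod_cast hq
        _ = (q:ℝ) * 1 := by ring
        _ ≤ (q:ℝ) * k := by gcongr
    exact exp_neg_le_one_sub _ (by positivity) (by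
      rw [div_le_div_iff₀ (by linarith) (by norm_num)]; linarith)
  have hprod : ∏ k ∈ Finset.Icc 1 m, Real.exp (-(1/((q:ℝ)*k) + (1/((q:ℝ)*k))^2)) ≤
      ∏ k ∈ Finset.Icc 1 m, (1 - 1/((q:ℝ)*k)) := by
    apply Finset.prod_le_prod (fun k _ => (Real.exp_pos _).le) hstep
  rw [← Real.exp_sum] at hprod
  refine le_trans (Real.exp_le_exp.mpr ?_) hprod
  -- compare exponents
  have hH : ∑ k ∈ Finset.Icc 1 m, (1:ℝ)/k ≤ 1 + Real.log m := by
    have h1 : ((harmonic m : ℚ) : ℝ) = ∑ k ∈ Finset.Icc 1 m, (1:ℝ)/k := by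
      rw [harmonic_eq_sum_Icc]; push_cast; simp [one_div]
    have := harmonic_le_one_add_log m
    rw [h1] at this
    exact this
  have hS : ∑ k ∈ Finset.Icc 1 m, (1:ℝ)/(k:ℝ)^2 ≤ π^2/6 := by
    have hs := hasSum_zeta_two
    calc ∑ k ∈ Finset.Icc 1 m, (1:ℝ)/(k:ℝ)^2
        ≤ ∑' n : ℕ, (1:ℝ)/(n:ℝ)^2 :=
          Summable.sum_le_tsum _ (fun i _ => by positivity) hs.summable
      _ = π^2/6 := hs.tsum_eq
  have hexpand : ∑ k ∈ Finset.Icc 1 m, (-(1/((q:ℝ)*k) + (1/((q:ℝ)*k))^2)) =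
      -((1/q) * ∑ k ∈ Finset.Icc 1 m, (1:ℝ)/k + (1/q^2) * ∑ k ∈ Finset.Icc 1 m, (1:ℝ)/(k:ℝ)^2) := by
    rw [Finset.mul_sum, Finset.mul_sum, ← Finset.sum_add_distrib, ← Finset.sum_neg_distrib]
    apply Finset.sum_congr rfl
    intro k hk
    simp only [Finset.mem_Icc] at hk
    have hk0 : (0:ℝ) < k := by exact_mod_cast hk.1
    field_simp
  rw [hexpand]
  have h1 : (1/(q:ℝ)) * (∑ k ∈ Finset.Icc 1 m, (1:ℝ)/k) ≤ (1/q) * (1 + Real.log m) := by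
    gcongr
  have h2 : (1/(q:ℝ)^2) * (∑ k ∈ Finset.Icc 1 m, (1:ℝ)/(k:ℝ)^2) ≤ (1/q^2) * (π^2/6) := by
    gcongr
  have e1 : -(π ^ 2 / (6 * (q:ℝ) ^ 2)) + (1 + Real.log m) * (-1 / q)
      = -((1/(q:ℝ)) * (1 + Real.log m) + (1/(q:ℝ)^2) * (π^2/6)) := by ring
  rw [e1]
  linarith
end
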